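/- Each vector field J_r (r ∈ I_1^m ∪ I_2^m) is a Killing vector field of the contravariant metric G: for all indices i, j, the Lie derivative of G along J_r vanishes, i.e. Σ_l ( J_r^l ∂G^{ij}/∂q_l − G^{lj} ∂J_r^i/∂q_l − G^{il} ∂J_r^j/∂q_l ) = 0 identically in q. -/

import Mathlib

noncomputable section

open scoped BigOperators

namespace P3

/-- Extended coordinates: `q_0 = 1`, `q_k = 0` for `k < 0` or `k > n`. -/
def qe (n : ℕ) (q : Fin n → ℝ) (k : ℤ) : ℝ :=
  if h : 1 ≤ k ∧ k ≤ (n : ℤ) then q ⟨(k - 1).toNat, by omega⟩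
  else if k = 0 then 1 else 0

/-- The special conformal Killing tensor `L` in Viète coordinates. -/
def Lmat (n : ℕ) (q : Fin n → ℝ) : Matrix (Fin n) (Fin n) ℝ :=
  Matrix.of fun i j => if (j : ℕ) = 0 then -q i else if (j : ℕ) = (i : ℕ) + 1 then 1 else 0

/-- The metric `G_0` (case `m = 0`) in Viète coordinates. -/
def G0mat (n : ℕ) (q : Fin n → ℝ) : Matrix (Fin n) (Fin n) ℝ :=
  Matrix.of fun i j => qe n q ((i : ℤ) + (j : ℤ) + 1 - (n : ℤ))

/-- The contravariant metric `G = L^m G_0`. -/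
def Gmat (n m : ℕ) (q : Fin n → ℝ) : Matrix (Fin n) (Fin n) ℝ :=
  (Lmat n q) ^ m * G0mat n q

/-- Killing tensors `K_r = Σ_{k=0}^{r-1} q_k L^{r-1-k}` (so `K_1 = Id`). -/
def Kmat (n : ℕ) (q : Fin n → ℝ) (r : ℕ) : Matrix (Fin n) (Fin n) ℝ :=
  ∑ k ∈ Finset.range r, qe n q (k : ℤ) • (Lmat n q) ^ (r - 1 - k)

/-- `A_r = K_r G`, with `A_i = 0` for `i ≤ 0` or `i > n`. -/
def Amat (n m : ℕ) (q : Fin n → ℝ) (r : ℤ) : Matrix (Fin n) (Fin n) ℝ :=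
  if 1 ≤ r ∧ r ≤ (n : ℤ) then Kmat n q r.toNat * Gmat n m q else 0

/-- Entries of `A_r` with 1-based integer indices (0 outside the valid range). -/
def Aent (n m : ℕ) (q : Fin n → ℝ) (r k j : ℤ) : ℝ :=
  if hk : 1 ≤ k ∧ k ≤ (n : ℤ) then
    if hj : 1 ≤ j ∧ j ≤ (n : ℤ) then
      Amat n m q r ⟨(k - 1).toNat, by omega⟩ ⟨(j - 1).toNat, by omega⟩
    else 0
  else 0

/-- `r ∈ I_1^m = {2,…,n−m+1} ∩ {2,…,n}`. -/
def inI1 (n m : ℕ) (r : ℤ) : Prop := 2 ≤ r ∧ r ≤ (n : ℤ) - m + 1 ∧ r ≤ (n : ℤ)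

/-- `r ∈ I_2^m = {n−m+2,…,n}`. -/
def inI2 (n m : ℕ) (r : ℤ) : Prop := (n : ℤ) - m + 2 ≤ r ∧ r ≤ (n : ℤ)

instance (n m : ℕ) (r : ℤ) : Decidable (inI1 n m r) := by unfold inI1; infer_instance
instance (n m : ℕ) (r : ℤ) : Decidable (inI2 n m r) := by unfold inI2; infer_instance

/-- Components `J_r^k` (1-based integer component index `k`) of the Killing
vector fields `J_r`; `J_1 = 0` and `J_i = 0` for `i ≤ 0` or `i > n`. -/
def Jcomp (n m : ℕ) (r : ℤ) (q : Fin n → ℝ) (k : ℤ) : ℝ :=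
  if r = 1 then 0
  else if inI1 n m r then
    if (n : ℤ) + 2 - m - r ≤ k ∧ k ≤ (n : ℤ) - m then
      (((n : ℤ) + 1 - m - k : ℤ) : ℝ) * qe n q ((m : ℤ) + r - n - 2 + k)
    else 0
  else if inI2 n m r then
    if (n : ℤ) + 2 - m ≤ k ∧ k ≤ 2 * (n : ℤ) + 2 - m - r then
      -((((n : ℤ) + 1 - m - k : ℤ) : ℝ) * qe n q ((m : ℤ) + r - n - 2 + k))
    else 0
  else 0

/-- Basic separable potentials for `α ≥ n-1`:  `Vup d = V^{(n-1+d)}`,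
via the forward recursion `V_r^{(α+1)} = V_{r+1}^{(α)} − q_r V_1^{(α)}`. -/
def Vup (n : ℕ) (q : Fin n → ℝ) : ℕ → ℤ → ℝ
  | 0 => fun r => if r = 1 then -1 else 0
  | d + 1 => fun r =>
      if 1 ≤ r ∧ r ≤ (n : ℤ) then Vup n q d (r + 1) - qe n q r * Vup n q d 1 else 0

/-- Basic separable potentials for `α ≤ 0`: `Vdn d = V^{(-d)}`, via the inverse
recursion `V_1^{(α)} = −q_n^{−1} V_n^{(α+1)}`, `V_{r+1}^{(α)} = V_r^{(α+1)} + q_r V_1^{(α)}`. -/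
def Vdn (n : ℕ) (q : Fin n → ℝ) : ℕ → ℤ → ℝ
  | 0 => fun r => if r = (n : ℤ) then -1 else 0
  | d + 1 => fun r =>
      if 1 ≤ r ∧ r ≤ (n : ℤ) then
        (if r = 1 then 0 else Vdn n q d (r - 1))
          + qe n q (r - 1) * (-(qe n q (n : ℤ))⁻¹ * Vdn n q d (n : ℤ))
      else 0

/-- The basic separable potential `V_r^{(α)}` (1-based integer index `r`). -/
def Vpot (n : ℕ) (q : Fin n → ℝ) (α r : ℤ) : ℝ :=
  if 0 ≤ α then
    if α ≤ (n : ℤ) - 1 then (if r = (n : ℤ) - α then -1 else 0)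
    else Vup n q (α - ((n : ℤ) - 1)).toNat r
  else Vdn n q (-α).toNat r

/-- The basic separable vector potential component `(P_r^{(γ)})^j`
(1-based integer indices `r`, `j`). -/
def Ppot (n : ℕ) (q : Fin n → ℝ) (γ r j : ℤ) : ℝ :=
  -∑ s ∈ Finset.range r.toNat, qe n q (s : ℤ) * Vpot n q (r + γ - (s : ℤ) - 1) j

/-- Partial derivative `∂f/∂q_j` of a real-valued function on `ℝ^n`. -/
def pd (n : ℕ) (j : Fin n) (f : (Fin n → ℝ) → ℝ) (x : Fin n → ℝ) : ℝ :=
  fderiv ℝ f x (Pi.single j 1)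

/-- Partial derivative `∂f/∂q_j` of a complex-valued function on `ℝ^n`. -/
def pdC (n : ℕ) (j : Fin n) (f : (Fin n → ℝ) → ℂ) (x : Fin n → ℝ) : ℂ :=
  fderiv ℝ f x (Pi.single j 1)

/-- Partial derivative in the `q_i` direction on phase space `ℝ^{2n}`. -/
def pdq (n : ℕ) (i : Fin n) (f : ((Fin n → ℝ) × (Fin n → ℝ)) → ℝ)
    (x : (Fin n → ℝ) × (Fin n → ℝ)) : ℝ :=
  fderiv ℝ f x (Pi.single i 1, 0)

/-- Partial derivative in the `p_i` direction on phase space `ℝ^{2n}`. -/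
def pdp (n : ℕ) (i : Fin n) (f : ((Fin n → ℝ) × (Fin n → ℝ)) → ℝ)
    (x : (Fin n → ℝ) × (Fin n → ℝ)) : ℝ :=
  fderiv ℝ f x (0, Pi.single i 1)

/-- Canonical Poisson bracket on `ℝ^{2n}`. -/
def pbr (n : ℕ) (f g : ((Fin n → ℝ) × (Fin n → ℝ)) → ℝ)
    (x : (Fin n → ℝ) × (Fin n → ℝ)) : ℝ :=
  ∑ i : Fin n, (pdq n i f x * pdp n i g x - pdp n i f x * pdq n i g x)

/-- Classical geodesic Stäckel Hamiltonian `E_r = ½ pᵀ A_r p`. -/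
def Ecl (n m : ℕ) (r : ℤ) (x : (Fin n → ℝ) × (Fin n → ℝ)) : ℝ :=
  (1 / 2) * ∑ k : Fin n, ∑ j : Fin n,
    x.2 k * Aent n m x.1 r ((k : ℤ) + 1) ((j : ℤ) + 1) * x.2 j

/-- Classical quasi-Stäckel term `W_r = Σ_j J_r^j p_j`. -/
def Wcl (n m : ℕ) (r : ℤ) (x : (Fin n → ℝ) × (Fin n → ℝ)) : ℝ :=
  ∑ j : Fin n, Jcomp n m r x.1 ((j : ℤ) + 1) * x.2 j

/-- Geodesic quasi-Stäckel Hamiltonian `𝓔_r = E_r + W_r`. -/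
def EWcl (n m : ℕ) (r : ℤ) (x : (Fin n → ℝ) × (Fin n → ℝ)) : ℝ :=
  Ecl n m r x + Wcl n m r x

/-- Classical magnetic term `M_r^{(γ)} = Σ_k (P_r^{(γ)})^k p_k`. -/
def Mcl (n : ℕ) (γ r : ℤ) (x : (Fin n → ℝ) × (Fin n → ℝ)) : ℝ :=
  ∑ k : Fin n, Ppot n x.1 γ r ((k : ℤ) + 1) * x.2 k

/-- The open set `Ω = {q : q_n ≠ 0}`. -/
def Omega (n : ℕ) : Set (Fin n → ℝ) := {x | qe n x (n : ℤ) ≠ 0}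

/-- Minimal quantization `Ê_r` of the geodesic part, written with the
derivatives to the right. -/
def Eop (n m : ℕ) (hb : ℝ) (r : ℤ) (f : (Fin n → ℝ) → ℂ) (x : Fin n → ℝ) : ℂ :=
  -(((hb : ℂ)) ^ 2 / 2) *
    ((∑ k : Fin n, ∑ j : Fin n,
        ((Aent n m x r ((k : ℤ) + 1) ((j : ℤ) + 1) : ℝ) : ℂ) *
          pdC n k (fun y => pdC n j f y) x)
      + (∑ j : Fin n,
          ((∑ k : Fin n, pd n k (fun y => Aent n m y r ((k : ℤ) + 1) ((j : ℤ) + 1)) x : ℝ) : ℂ) *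
            pdC n j f x)
      - ((m : ℂ) / 2) * (((qe n x (n : ℤ) : ℝ) : ℂ))⁻¹ *
          ∑ j : Fin n, ((Aent n m x r (n : ℤ) ((j : ℤ) + 1) : ℝ) : ℂ) * pdC n j f x)

/-- Minimal quantization `Ŵ_r = −iħ Σ_j J_r^j ∂_j`. -/
def Wop (n m : ℕ) (hb : ℝ) (r : ℤ) (f : (Fin n → ℝ) → ℂ) (x : Fin n → ℝ) : ℂ :=
  -(Complex.I * (hb : ℂ)) * ∑ j : Fin n, ((Jcomp n m r x ((j : ℤ) + 1) : ℝ) : ℂ) * pdC n j f x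

/-- Quantized geodesic quasi-Stäckel Hamiltonian `𝓔̂_r = Ê_r + Ŵ_r`. -/
def EWop (n m : ℕ) (hb : ℝ) (r : ℤ) (f : (Fin n → ℝ) → ℂ) (x : Fin n → ℝ) : ℂ :=
  Eop n m hb r f x + Wop n m hb r f x

/-- Minimal quantization `M̂_r^{(γ)}` of the magnetic term. -/
def Mop (n m : ℕ) (hb : ℝ) (γ r : ℤ) (f : (Fin n → ℝ) → ℂ) (x : Fin n → ℝ) : ℂ :=
  -(Complex.I * (hb : ℂ) / 2) *
    ((∑ j : Fin n, pdC n j (fun y => ((Ppot n y γ r ((j : ℤ) + 1) : ℝ) : ℂ) * f y) x)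
      + (∑ j : Fin n, ((Ppot n x γ r ((j : ℤ) + 1) : ℝ) : ℂ) * pdC n j f x)
      - ((m : ℂ) / 2) * (((qe n x (n : ℤ) : ℝ) : ℂ))⁻¹ *
          ((Ppot n x γ r (n : ℤ) : ℝ) : ℂ) * f x)

end P3

/-!
Both tensors have closed forms in the extended coordinates, with 1-based indices. By induction
on `m`, using `(L A)^{IJ} = -q_I A^{1J} + A^{I+1,J}`, the entry `G^{IJ}` is
`Gext I J = gSign I J * q_{I+J+m-n-1} + [m = n+1] q_I q_J`, where
`gSign I J = [I, J ≤ n-m] - [I, J ≥ n+1-m]`; and `J_r^k = jCoef k * q_{t+k}` with `t = m+r-n-2`.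
Since `∂_l q_k = δ_{kl}` (an index `0` contributes nothing, `q_0 = 1` being constant), the Lie
derivative collapses to a finite sum: the quadratic terms of the case `m = n+1` cancel, and the
rest is `q_{t+I+J+m-n-1}` times an integer combination of values of `gSign` and `jCoef`, which
vanishes by a case analysis on their supports.
-/

namespace P3

open Finset

section ExtendedCoordinates

variable {n : ℕ} (q : Fin n → ℝ)

lemma qe_zero : qe n q 0 = 1 := by
  simp [qe]

lemma qe_eq_zero {k : ℤ} (hk : k < 0 ∨ (n : ℤ) < k) : qe n q k = 0 := by
  unfold qe
  split_ifs <;> first | rfl | omega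

lemma qe_val_add_one (i : Fin n) : qe n q ((i : ℤ) + 1) = q i := by
  rw [qe, dif_pos (by omega)]
  congr
  simp

lemma hasFDerivAt_qe (k : ℤ) (x : Fin n → ℝ) :
    HasFDerivAt (fun y => qe n y k)
      (if h : 1 ≤ k ∧ k ≤ (n : ℤ) then
        ContinuousLinearMap.proj (R := ℝ) (φ := fun _ : Fin n => ℝ) ⟨(k - 1).toNat, by omega⟩
      else 0) x := by
  by_cases h : 1 ≤ k ∧ k ≤ (n : ℤ)
  · simp only [qe, dif_pos h]
    exact (ContinuousLinearMap.proj (R := ℝ) (φ := fun _ : Fin n => ℝ) _).hasFDerivAt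
  · simp only [qe, dif_neg h]
    exact hasFDerivAt_const _ _

lemma differentiableAt_qe (k : ℤ) (x : Fin n → ℝ) : DifferentiableAt ℝ (fun y => qe n y k) x :=
  (hasFDerivAt_qe k x).differentiableAt

lemma pd_qe (l : Fin n) (k : ℤ) (x : Fin n → ℝ) :
    pd n l (fun y => qe n y k) x = if k = (l : ℤ) + 1 then 1 else 0 := by
  rw [pd, (hasFDerivAt_qe k x).fderiv]
  split_ifs with h hkl hkl
  · simp only [ContinuousLinearMap.proj_apply, Pi.single_apply, Fin.ext_iff]
    rw [if_pos (by omega)]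
  · simp only [ContinuousLinearMap.proj_apply, Pi.single_apply, Fin.ext_iff]
    rw [if_neg (by omega)]
  · omega
  · simp

end ExtendedCoordinates

section PartialDerivative

variable {n : ℕ} {l : Fin n} {f g : (Fin n → ℝ) → ℝ} {x : Fin n → ℝ}

lemma pd_add (hf : DifferentiableAt ℝ f x) (hg : DifferentiableAt ℝ g x) :
    pd n l (fun y => f y + g y) x = pd n l f x + pd n l g x := by
  simp [pd, fderiv_fun_add hf hg]

lemma pd_const_mul (c : ℝ) (hf : DifferentiableAt ℝ f x) :
    pd n l (fun y => c * f y) x = c * pd n l f x := by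
  simp [pd, fderiv_const_mul hf]

lemma pd_mul (hf : DifferentiableAt ℝ f x) (hg : DifferentiableAt ℝ g x) :
    pd n l (fun y => f y * g y) x = f x * pd n l g x + g x * pd n l f x := by
  simp [pd, fderiv_fun_mul hf hg]

end PartialDerivative

lemma sum_mul_ite_eq {n : ℕ} (f : ℤ → ℝ) (k : ℤ) :
    ∑ l : Fin n, f ((l : ℤ) + 1) * (if k = (l : ℤ) + 1 then 1 else 0)
      = if 1 ≤ k ∧ k ≤ (n : ℤ) then f k else 0 := by
  simp only [mul_boole]
  split_ifs with h
  · rw [sum_eq_single_of_mem (⟨(k - 1).toNat, by omega⟩ : Fin n) (mem_univ _)]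
    · rw [if_pos (by dsimp only; omega)]
      congr 1
      dsimp only
      omega
    · intro l _ hl
      exact if_neg fun hkl => hl (by ext; dsimp only; omega)
  · exact sum_eq_zero fun l _ => if_neg fun hkl => h (by omega)

section ClosedFormOfG

def gSign (n m : ℕ) (I J : ℤ) : ℤ :=
  (if I ≤ (n : ℤ) - m ∧ J ≤ (n : ℤ) - m then 1 else 0)
    - (if (n : ℤ) + 1 - m ≤ I ∧ (n : ℤ) + 1 - m ≤ J then 1 else 0)

def Gext (n m : ℕ) (q : Fin n → ℝ) (I J : ℤ) : ℝ :=
  gSign n m I J * qe n q (I + J + m - n - 1)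
    + (if m = n + 1 then 1 else 0) * (qe n q I * qe n q J)

variable {n m : ℕ} (q : Fin n → ℝ)

lemma gSign_comm (I J : ℤ) : gSign n m I J = gSign n m J I := by
  simp only [gSign, and_comm]

lemma Gext_comm (I J : ℤ) : Gext n m q I J = Gext n m q J I := by
  rw [Gext, Gext, gSign_comm, add_comm I J, mul_comm (qe n q I)]

lemma gSign_succ (I J : ℤ) :
    gSign n (m + 1) I J = gSign n m (I + 1) J - if J = (n : ℤ) - m then 1 else 0 := by
  unfold gSign
  push_cast
  split_ifs <;> omega

lemma gSign_one_mul_qe (hm : m ≤ n) {J : ℤ} (hJ : 1 ≤ J) :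
    gSign n m 1 J * qe n q (1 + J + m - n - 1)
      = (if J = (n : ℤ) - m then 1 else 0) - if m = n then qe n q J else 0 := by
  rcases lt_trichotomy J ((n : ℤ) - m) with hlt | heq | hgt
  · rw [qe_eq_zero q (by omega), if_neg (by omega), if_neg (by omega)]
    simp
  · rw [show 1 + J + m - n - 1 = 0 by omega, qe_zero, if_pos heq, if_neg (by omega),
      show gSign n m 1 J = 1 by simp only [gSign]; split_ifs <;> omega]
    simp
  · rw [if_neg (by omega)]
    rcases eq_or_lt_of_le hm with rfl | hmn
    · rw [if_pos rfl, show 1 + J + m - m - 1 = J by ring,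
        show gSign m m 1 J = -1 by simp only [gSign]; split_ifs <;> omega]
      simp
    · rw [if_neg hmn.ne, show gSign n m 1 J = 0 by simp only [gSign]; split_ifs <;> omega]
      simp

lemma Gext_succ (hm : m ≤ n) (I : ℤ) {J : ℤ} (hJ : 1 ≤ J) :
    Gext n (m + 1) q I J = -qe n q I * Gext n m q 1 J + Gext n m q (I + 1) J := by
  simp only [Gext, if_neg (show m ≠ n + 1 by omega), zero_mul, add_zero, gSign_succ,
    gSign_one_mul_qe q hm hJ, show m + 1 = n + 1 ↔ m = n by omega]
  rw [show I + J + ((m + 1 : ℕ) : ℤ) - n - 1 = I + 1 + J + m - n - 1 by push_cast; ring]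
  by_cases hJm : J = (n : ℤ) - m
  · rw [show I + 1 + J + m - n - 1 = I by omega]
    split_ifs <;> push_cast <;> ring
  · split_ifs <;> push_cast <;> ring

lemma Gext_natCast_add_one_left (hm : m ≤ n) (J : ℤ) : Gext n m q (n + 1) J = 0 := by
  rw [Gext, if_neg (by omega), zero_mul, add_zero]
  by_cases hJm : (n : ℤ) + 1 - m ≤ J
  · rw [qe_eq_zero q (by omega), mul_zero]
  · rw [show gSign n m (n + 1) J = 0 by simp only [gSign]; split_ifs <;> omega,
      Int.cast_zero, zero_mul]

lemma Lmat_apply (i k : Fin n) :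
    Lmat n q i k = -q i * (if (1 : ℤ) = (k : ℤ) + 1 then 1 else 0)
      + if (i : ℤ) + 1 + 1 = (k : ℤ) + 1 then 1 else 0 := by
  simp only [Lmat, Matrix.of_apply]
  split_ifs <;> first | omega | ring

lemma sum_Lmat_mul (i : Fin n) (f : ℤ → ℝ) (hf : f (n + 1) = 0) :
    ∑ k : Fin n, Lmat n q i k * f ((k : ℤ) + 1) = -q i * f 1 + f ((i : ℤ) + 1 + 1) := by
  simp only [Lmat_apply, add_mul, mul_assoc, sum_add_distrib, ← mul_sum]
  simp only [mul_comm _ (f _), sum_mul_ite_eq]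
  rw [if_pos (by have := i.pos; omega)]
  split_ifs with h
  · ring
  · rw [show (i : ℤ) + 1 + 1 = n + 1 by omega, hf]
    ring

lemma Gmat_apply (hm : m ≤ n + 1) (i j : Fin n) :
    Gmat n m q i j = Gext n m q ((i : ℤ) + 1) ((j : ℤ) + 1) := by
  induction m generalizing i with
  | zero =>
    simp only [Gmat, pow_zero, Matrix.one_mul, G0mat, Gext, gSign, Matrix.of_apply]
    rw [if_pos (by omega), if_neg (by omega), if_neg (by omega)]
    push_cast
    rw [one_mul, zero_mul, add_zero]
    congr 1
    ring
  | succ m ih =>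
    rw [Gmat, pow_succ', Matrix.mul_assoc, ← Gmat, Matrix.mul_apply]
    simp only [ih (by omega)]
    rw [sum_Lmat_mul q i (Gext n m q · ((j : ℤ) + 1)) (Gext_natCast_add_one_left q (by omega) _),
      ← qe_val_add_one q i, Gext_succ q (by omega) _ (by omega)]

lemma sum_mul_pd_Gext (f : ℤ → ℝ) {I J : ℤ} (hI : 1 ≤ I ∧ I ≤ (n : ℤ))
    (hJ : 1 ≤ J ∧ J ≤ (n : ℤ)) :
    ∑ l : Fin n, f ((l : ℤ) + 1) * pd n l (fun y => Gext n m y I J) q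
      = gSign n m I J * (if 1 ≤ I + J + m - n - 1 ∧ I + J + m - n - 1 ≤ (n : ℤ)
          then f (I + J + m - n - 1) else 0)
        + (if m = n + 1 then 1 else 0) * (f I * qe n q J + qe n q I * f J) := by
  have hq := fun k => differentiableAt_qe (n := n) k q
  simp only [Gext]
  rw [sum_congr rfl fun l _ => by
    rw [pd_add ((hq _).const_mul _) (((hq _).fun_mul (hq _)).const_mul _),
      pd_const_mul _ (hq _), pd_const_mul _ ((hq _).fun_mul (hq _)), pd_mul (hq _) (hq _),
      pd_qe, pd_qe, pd_qe]]
  simp only [mul_add, sum_add_distrib, mul_left_comm (f _), ← mul_sum, sum_mul_ite_eq,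
    if_pos hI, if_pos hJ]
  ring

end ClosedFormOfG

section KillingVectorField

def jCoef (n m : ℕ) (r k : ℤ) : ℤ :=
  if r = 1 then 0
  else if inI1 n m r then
    if (n : ℤ) + 2 - m - r ≤ k ∧ k ≤ (n : ℤ) - m then (n : ℤ) + 1 - m - k else 0
  else if inI2 n m r then
    if (n : ℤ) + 2 - m ≤ k ∧ k ≤ 2 * (n : ℤ) + 2 - m - r then -((n : ℤ) + 1 - m - k) else 0
  else 0

variable {n m : ℕ} {r : ℤ}

lemma Jcomp_eq (q : Fin n → ℝ) (k : ℤ) :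
    Jcomp n m r q k = jCoef n m r k * qe n q (m + r - n - 2 + k) := by
  unfold Jcomp jCoef
  split_ifs <;> push_cast <;> ring

lemma jCoef_eq_zero (hm : m ≤ n + 1) {k : ℤ} (hk : ¬(1 ≤ k ∧ k ≤ (n : ℤ))) :
    jCoef n m r k = 0 := by
  unfold jCoef inI1 inI2
  split_ifs <;> omega

lemma jCoef_of_inI1 (h : inI1 n m r) (k : ℤ) :
    jCoef n m r k
      = if (n : ℤ) + 2 - m - r ≤ k ∧ k ≤ (n : ℤ) - m then (n : ℤ) + 1 - m - k else 0 := by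
  have hr : r ≠ 1 := by unfold inI1 at h; omega
  rw [jCoef, if_neg hr, if_pos h]

lemma jCoef_of_inI2 (hr : r ≠ 1) (h : inI2 n m r) (h1 : ¬inI1 n m r) (k : ℤ) :
    jCoef n m r k
      = if (n : ℤ) + 2 - m ≤ k ∧ k ≤ 2 * (n : ℤ) + 2 - m - r then -((n : ℤ) + 1 - m - k)
        else 0 := by
  rw [jCoef, if_neg hr, if_neg h1, if_pos h]

lemma ite_Jcomp_eq (hm : m ≤ n + 1) (q : Fin n → ℝ) (k : ℤ) :
    (if 1 ≤ k ∧ k ≤ (n : ℤ) then Jcomp n m r q k else 0) = Jcomp n m r q k := by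
  split_ifs with hk
  · rfl
  · rw [Jcomp_eq, jCoef_eq_zero hm hk, Int.cast_zero, zero_mul]

lemma sum_mul_pd_Jcomp (q : Fin n → ℝ) (f : ℤ → ℝ) (k : ℤ) :
    ∑ l : Fin n, f ((l : ℤ) + 1) * pd n l (fun y => Jcomp n m r y k) q
      = jCoef n m r k * (if 1 ≤ m + r - n - 2 + k ∧ m + r - n - 2 + k ≤ (n : ℤ)
          then f (m + r - n - 2 + k) else 0) := by
  simp only [Jcomp_eq, pd_const_mul _ (differentiableAt_qe _ q), pd_qe, mul_left_comm (f _),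
    ← mul_sum, sum_mul_ite_eq]

end KillingVectorField

section LieDerivative

variable {n m : ℕ} {r : ℤ}

lemma gSign_mul_jCoef (hr : inI1 n m r ∨ inI2 n m r) {I J : ℤ}
    (hI : 1 ≤ I ∧ I ≤ (n : ℤ)) (hJ : 1 ≤ J ∧ J ≤ (n : ℤ))
    (hT : 0 ≤ m + r - n - 2 + (I + J + m - n - 1) ∧ m + r - n - 2 + (I + J + m - n - 1) ≤ (n : ℤ)) :
    gSign n m I J * jCoef n m r (I + J + m - n - 1)
      = jCoef n m r I * (if 1 ≤ m + r - n - 2 + I ∧ m + r - n - 2 + I ≤ (n : ℤ)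
            then gSign n m (m + r - n - 2 + I) J else 0)
        + jCoef n m r J * (if 1 ≤ m + r - n - 2 + J ∧ m + r - n - 2 + J ≤ (n : ℤ)
            then gSign n m I (m + r - n - 2 + J) else 0) := by
  by_cases hr1 : r = 1
  · simp [jCoef, hr1]
  by_cases h1 : inI1 n m r
  · simp only [jCoef_of_inI1 h1, gSign]
    unfold inI1 at h1
    by_cases hIa : I ≤ n - m <;> by_cases hJa : J ≤ n - m <;>
      simp (disch := omega) only [if_pos, if_neg] <;> (try split_ifs) <;> omega
  · have h2 : inI2 n m r := hr.resolve_left h1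
    simp only [jCoef_of_inI2 hr1 h2 h1, gSign]
    unfold inI2 at h2
    by_cases hIa : I ≤ n - m <;> by_cases hJa : J ≤ n - m <;>
      simp (disch := omega) only [if_pos, if_neg] <;> (try split_ifs) <;> omega

lemma ite_Gext_shift (hr : inI1 n m r ∨ inI2 n m r) (q : Fin n → ℝ) {I : ℤ} (hI : 1 ≤ I)
    (J : ℤ) :
    (if 1 ≤ m + r - n - 2 + I ∧ m + r - n - 2 + I ≤ (n : ℤ)
        then Gext n m q (m + r - n - 2 + I) J else 0)
      = ((if 1 ≤ m + r - n - 2 + I ∧ m + r - n - 2 + I ≤ (n : ℤ)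
          then gSign n m (m + r - n - 2 + I) J else 0 : ℤ) : ℝ)
          * qe n q (m + r - n - 2 + (I + J + m - n - 1))
        + (if m = n + 1 then 1 else 0) * (qe n q (m + r - n - 2 + I) * qe n q J) := by
  rw [Gext, show m + r - n - 2 + I + J + m - n - 1 = m + r - n - 2 + (I + J + m - n - 1) by ring]
  split_ifs with hP hm
  · rfl
  · rfl
  -- for `m = n + 1` the shift `r - 1` is nonnegative, so the index lies above `n`
  · rw [qe_eq_zero q (k := m + r - n - 2 + I) (by unfold inI1 inI2 at hr; omega)]
    simp
  · simp

lemma lieDerivative_closedForm_eq_zero (hm : m ≤ n + 1) (hr : inI1 n m r ∨ inI2 n m r)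
    (q : Fin n → ℝ) {I J : ℤ} (hI : 1 ≤ I ∧ I ≤ (n : ℤ)) (hJ : 1 ≤ J ∧ J ≤ (n : ℤ)) :
    gSign n m I J * (if 1 ≤ I + J + m - n - 1 ∧ I + J + m - n - 1 ≤ (n : ℤ)
        then Jcomp n m r q (I + J + m - n - 1) else 0)
      + (if m = n + 1 then 1 else 0) * (Jcomp n m r q I * qe n q J + qe n q I * Jcomp n m r q J)
      - jCoef n m r I * (if 1 ≤ m + r - n - 2 + I ∧ m + r - n - 2 + I ≤ (n : ℤ)
          then Gext n m q (m + r - n - 2 + I) J else 0)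
      - jCoef n m r J * (if 1 ≤ m + r - n - 2 + J ∧ m + r - n - 2 + J ≤ (n : ℤ)
          then Gext n m q I (m + r - n - 2 + J) else 0) = 0 := by
  have hshiftJ := ite_Gext_shift hr q hJ.1 I
  rw [add_comm J I, gSign_comm _ I] at hshiftJ
  rw [ite_Jcomp_eq hm, Jcomp_eq, Jcomp_eq, Jcomp_eq, ite_Gext_shift hr q hI.1, Gext_comm q I,
    hshiftJ]
  by_cases hT : 0 ≤ m + r - n - 2 + (I + J + m - n - 1)
      ∧ m + r - n - 2 + (I + J + m - n - 1) ≤ (n : ℤ)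
  · have hcoef := congrArg (Int.cast : ℤ → ℝ) (gSign_mul_jCoef hr hI hJ hT)
    push_cast at hcoef ⊢
    linear_combination qe n q (m + r - n - 2 + (I + J + m - n - 1)) * hcoef
  · rw [qe_eq_zero q (k := m + r - n - 2 + (I + J + m - n - 1)) (by omega)]
    ring

end LieDerivative

theorem J_is_killing_for_G_general (n m : ℕ) (hm : m ≤ n + 1)
    (r : ℤ) (hr : inI1 n m r ∨ inI2 n m r)
    (q : Fin n → ℝ) (i j : Fin n) :
    ∑ l : Fin n,
      (Jcomp n m r q ((l : ℤ) + 1) * pd n l (fun y => Gmat n m y i j) q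
        - Gmat n m q l j * pd n l (fun y => Jcomp n m r y ((i : ℤ) + 1)) q
        - Gmat n m q i l * pd n l (fun y => Jcomp n m r y ((j : ℤ) + 1)) q) = 0 := by
  have hI : 1 ≤ (i : ℤ) + 1 ∧ (i : ℤ) + 1 ≤ n := by omega
  have hJ : 1 ≤ (j : ℤ) + 1 ∧ (j : ℤ) + 1 ≤ n := by omega
  simp only [Gmat_apply _ hm]
  rw [sum_sub_distrib, sum_sub_distrib, sum_mul_pd_Gext q _ hI hJ,
    sum_mul_pd_Jcomp q (fun K => Gext n m q K ((j : ℤ) + 1)),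
    sum_mul_pd_Jcomp q (fun K => Gext n m q ((i : ℤ) + 1) K)]
  exact lieDerivative_closedForm_eq_zero hm hr q hI hJ

/-- Each `J_r`, `r ∈ I_1^m ∪ I_2^m`, is a Killing vector
field of the contravariant metric `G`: the Lie derivative of `G` along `J_r`
vanishes identically. -/
theorem J_is_killing_for_G (n m : ℕ) (hn : 1 ≤ n) (hm : m ≤ n + 1)
    (r : ℤ) (hr : inI1 n m r ∨ inI2 n m r)
    (q : Fin n → ℝ) (i j : Fin n) :
    ∑ l : Fin n,
      (Jcomp n m r q ((l : ℤ) + 1) * pd n l (fun y => Gmat n m y i j) q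
        - Gmat n m q l j * pd n l (fun y => Jcomp n m r y ((i : ℤ) + 1)) q
        - Gmat n m q i l * pd n l (fun y => Jcomp n m r y ((j : ℤ) + 1)) q) = 0 :=
  J_is_killing_for_G_general n m hm r hr q i j

end P3
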